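/- Soft performance difference lemma with arbitrary reference function: For every step-indexed function f = (f_h)_{h=1}^H with f_h : S_h × A → ℝ and all policies π† and π, one has J_β(π†) − J_β(π) = E_{π†}[Σ_{h=1}^H ((T^π_β f)_h(s_h,a_h) − f_h(s_h,a_h))] + E_π[Σ_{h=1}^H (f_h(s_h,a_h) − (T^π_β f)_h(s_h,a_h))] + E_{π†}[Σ_{h=1}^H ( f_h(s_h,a_h) − β log(π†_h(a_h|s_h)/π_ref,h(a_h|s_h)) − E_{a∼π_h(·|s_h)}[ f_h(s_h,a) − β log(π_h(a|s_h)/π_ref,h(a|s_h)) ] )]. -/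

import Mathlib

/-!
Write `V` for `softCont πref β π f`, so that `V_h(s) = E_{a∼π_h(·|s)}[f_h(s,a) − β log(π_h/πref_h)]`
and `V_{H+1} = 0`. Peeling off the first step of the trajectory shows by induction on `H` that
whenever `W` solves the Bellman recursion `W_h = E_{a∼μ_h}[c_h + P_h W_{h+1}]` for a policy `μ`,
the expected sum `E_μ[Σ_h c_h + W_{H+1}]` equals `E_ρ[W_1]`. Two instances give the theorem:
under `πdag` the first and third terms add up to `J(πdag)` minus the telescoping sum
`Σ_h (V_h(s_h) − P_h V_{h+1}(s_h,a_h))`, whose expectation is `E_ρ[V_1]`; under `π`, `V` is itself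
the value of the reward `f − β log(π/πref) − P V`, which makes the second term `E_ρ[V_1] − J(π)`.
-/

open Finset

namespace TBRM

/-- `p` is a probability mass function on a finite type. -/
def IsPMF {X : Type*} [Fintype X] (p : X → ℝ) : Prop :=
  (∀ x, 0 ≤ p x) ∧ ∑ x, p x = 1

/-- χ²-divergence between pmfs on a finite type. -/
noncomputable def chiSq {X : Type*} [Fintype X] (p q : X → ℝ) : ℝ :=
  (∑ x, p x ^ 2 / q x) - 1

variable {H : ℕ} {S : Fin (H + 1) → Type*} {A : Type*}
variable [∀ i, Fintype (S i)] [∀ i, DecidableEq (S i)] [Fintype A] [DecidableEq A]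

/-- Density of a full trajectory (including the extra final state `s_{H+1}`),
under initial distribution `ρ`, transition kernels `P`, and policy `π`. -/
noncomputable def trajDensity (ρ : S 0 → ℝ)
    (P : ∀ h : Fin H, S h.castSucc → A → S h.succ → ℝ)
    (π : ∀ h : Fin H, S h.castSucc → A → ℝ)
    (s : ∀ i : Fin (H + 1), S i) (a : Fin H → A) : ℝ :=
  ρ (s 0) * ∏ h : Fin H, (π h (s h.castSucc) (a h) * P h (s h.castSucc) (a h) (s h.succ))

/-- Expectation of a trajectory functional under policy `π`. -/
noncomputable def expTraj (ρ : S 0 → ℝ)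
    (P : ∀ h : Fin H, S h.castSucc → A → S h.succ → ℝ)
    (π : ∀ h : Fin H, S h.castSucc → A → ℝ)
    (f : (∀ i : Fin (H + 1), S i) → (Fin H → A) → ℝ) : ℝ :=
  ∑ s : ∀ i : Fin (H + 1), S i, ∑ a : Fin H → A, trajDensity ρ P π s a * f s a

/-- Step-`h` occupancy measure `d_h^π(x,b)`. -/
noncomputable def occ (ρ : S 0 → ℝ)
    (P : ∀ h : Fin H, S h.castSucc → A → S h.succ → ℝ)
    (π : ∀ h : Fin H, S h.castSucc → A → ℝ)
    (h : Fin H) (x : S h.castSucc) (b : A) : ℝ :=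
  expTraj ρ P π (fun s a => if s h.castSucc = x ∧ a h = b then 1 else 0)


/-- KL-regularized return `J_β(π)` relative to a reference policy `πref`. -/
noncomputable def KLret (ρ : S 0 → ℝ)
    (P : ∀ h : Fin H, S h.castSucc → A → S h.succ → ℝ)
    (πref : ∀ h : Fin H, S h.castSucc → A → ℝ)
    (r : ∀ h : Fin H, S h.castSucc → A → ℝ) (β : ℝ)
    (π : ∀ h : Fin H, S h.castSucc → A → ℝ) : ℝ :=
  expTraj ρ P π (fun s a => ∑ h : Fin H,
    (r h (s h.castSucc) (a h)
      - β * Real.log (π h (s h.castSucc) (a h) / πref h (s h.castSucc) (a h))))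

/-- The per-layer "soft continuation value" of a step-indexed function `f` under a policy
`π`: it vanishes on the last layer `S_{H+1}`, and on layer `h` it is
`E_{a∼π_h(·|s)}[ f_h(s,a) − β log(π_h(a|s)/πref_h(a|s)) ]`. -/
noncomputable def softCont
    (πref : ∀ h : Fin H, S h.castSucc → A → ℝ) (β : ℝ)
    (π : ∀ h : Fin H, S h.castSucc → A → ℝ)
    (f : ∀ h : Fin H, S h.castSucc → A → ℝ) :
    ∀ i : Fin (H + 1), S i → ℝ :=
  Fin.lastCases (fun _ => 0)
    (fun h s => ∑ a : A, π h s a * (f h s a - β * Real.log (π h s a / πref h s a)))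

/-- The soft Bellman policy operator `(T^π_β f)_h(s,a)`: for `h < H` it equals
`r_h(s,a) + E_{s'∼P_h(s,a)} E_{a'∼π_{h+1}(·|s')}[f_{h+1}(s',a') − β log(π_{h+1}(a'|s')/πref_{h+1}(a'|s'))]`,
and for the last step it equals `r_H(s,a)` (the continuation value being `0`). -/
noncomputable def Tpol (P : ∀ h : Fin H, S h.castSucc → A → S h.succ → ℝ)
    (πref : ∀ h : Fin H, S h.castSucc → A → ℝ)
    (r : ∀ h : Fin H, S h.castSucc → A → ℝ) (β : ℝ)
    (π : ∀ h : Fin H, S h.castSucc → A → ℝ)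
    (f : ∀ h : Fin H, S h.castSucc → A → ℝ)
    (h : Fin H) (s : S h.castSucc) (b : A) : ℝ :=
  r h s b + ∑ s' : S h.succ, P h s b s' * softCont πref β π f h.succ s'

end TBRM

theorem Fintype.sum_pi_fin_succ {n : ℕ} {α : Fin (n + 1) → Type*} [∀ i, Fintype (α i)]
    {M : Type*} [AddCommMonoid M] (F : (∀ i, α i) → M) :
    ∑ s, F s = ∑ x : α 0, ∑ s : ∀ i : Fin n, α i.succ, F (Fin.cons x s) := by
  rw [← Fintype.sum_prod_type']
  exact (Fintype.sum_equiv (Fin.consEquiv α) _ _ fun _ => rfl).symm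

namespace TBRM

section

variable {H : ℕ} {A : Type*}

theorem trajDensity_cons {S : Fin (H + 2) → Type*} (ρ : S 0 → ℝ)
    (P : ∀ h : Fin (H + 1), S h.castSucc → A → S h.succ → ℝ)
    (π : ∀ h : Fin (H + 1), S h.castSucc → A → ℝ)
    (x : S 0) (s : ∀ i : Fin (H + 1), S i.succ) (b : A) (a : Fin H → A) :
    trajDensity ρ P π (Fin.cons x s) (Fin.cons b a)
      = ρ x * π 0 x b * trajDensity (P 0 x b) (fun h => P h.succ) (fun h => π h.succ) s a := by
  rw [trajDensity, Fin.prod_univ_succ]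
  change ρ x * (π 0 x b * P 0 x b (s 0) * ∏ h : Fin H,
    (π h.succ (s h.castSucc) (a h) * P h.succ (s h.castSucc) (a h) (s h.succ))) = _
  rw [trajDensity]
  ring

variable [Fintype A]

theorem expTraj_cons {S : Fin (H + 2) → Type*} [∀ i, Fintype (S i)] (ρ : S 0 → ℝ)
    (P : ∀ h : Fin (H + 1), S h.castSucc → A → S h.succ → ℝ)
    (π : ∀ h : Fin (H + 1), S h.castSucc → A → ℝ)
    (F : (∀ i, S i) → (Fin (H + 1) → A) → ℝ) :
    expTraj ρ P π F = ∑ x, ∑ b, ρ x * π 0 x b *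
      expTraj (P 0 x b) (fun h => P h.succ) (fun h => π h.succ)
        (fun s a => F (Fin.cons x s) (Fin.cons b a)) := by
  simp only [expTraj, Fintype.sum_pi_fin_succ (α := S), Fintype.sum_pi_fin_succ (α := fun _ => A),
    trajDensity_cons, Finset.mul_sum, mul_assoc]
  refine Fintype.sum_congr _ _ fun x => ?_
  rw [Finset.sum_comm]

@[simp]
theorem softCont_last {S : Fin (H + 1) → Type*} (πref : ∀ h : Fin H, S h.castSucc → A → ℝ) (β : ℝ)
    (π f : ∀ h : Fin H, S h.castSucc → A → ℝ) (x : S (Fin.last H)) :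
    softCont πref β π f (Fin.last H) x = 0 := by
  simp [softCont]

@[simp]
theorem softCont_castSucc {S : Fin (H + 1) → Type*} (πref : ∀ h : Fin H, S h.castSucc → A → ℝ)
    (β : ℝ) (π f : ∀ h : Fin H, S h.castSucc → A → ℝ) (h : Fin H) (x : S h.castSucc) :
    softCont πref β π f h.castSucc x
      = ∑ b, π h x b * (f h x b - β * Real.log (π h x b / πref h x b)) := by
  simp [softCont]

variable {S : Fin (H + 1) → Type*} [∀ i, Fintype (S i)] (ρ : S 0 → ℝ)
  (P : ∀ h : Fin H, S h.castSucc → A → S h.succ → ℝ) (π : ∀ h : Fin H, S h.castSucc → A → ℝ)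

theorem expTraj_eq_of_bellman
    (hP : ∀ h x b, ∑ y, P h x b y = 1) (hπ : ∀ h x, ∑ b, π h x b = 1)
    (c : ∀ h : Fin H, S h.castSucc → A → ℝ) (W : ∀ i, S i → ℝ)
    (hW : ∀ h x, W h.castSucc x = ∑ b, π h x b * (c h x b + ∑ y, P h x b y * W h.succ y)) :
    expTraj ρ P π (fun s a => ∑ h, c h (s h.castSucc) (a h) + W (Fin.last H) (s (Fin.last H)))
      = ∑ x, ρ x * W 0 x := by
  induction H with
  | zero =>
    simp only [expTraj, trajDensity, Finset.univ_eq_empty, Finset.prod_empty, Finset.sum_empty,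
      mul_one, zero_add, Fintype.sum_unique]
    exact Fintype.sum_equiv (Equiv.piUnique (α := Fin 1) S) _ _ fun _ => rfl
  | succ H ih =>
    rw [expTraj_cons]
    refine Fintype.sum_congr _ _ fun x => ?_
    rw [show W 0 x = W (Fin.castSucc 0) x from rfl, hW 0 x, Finset.mul_sum]
    refine Fintype.sum_congr _ _ fun b => ?_
    rw [mul_assoc]
    congr 2
    -- The tail chain starts from `P 0 x b`; shifting its value by `c 0 x b` absorbs the first reward.
    have htail := ih (P 0 x b) (fun h => P h.succ) (fun h => π h.succ) (fun h => hP h.succ)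
      (fun h => hπ h.succ) (fun h => c h.succ) (fun i y => W i.succ y + c 0 x b) fun h y => by
        rw [show W h.castSucc.succ y = W h.succ.castSucc y from rfl, hW h.succ]
        simp only [mul_add, Finset.sum_add_distrib, ← Finset.sum_mul, hP, hπ, one_mul, add_assoc]
    simp only [mul_add, Finset.sum_add_distrib, ← Finset.sum_mul, hP 0 x b, one_mul] at htail
    rw [add_comm (c 0 x b), ← htail]
    congr 1
    funext s a
    rw [Fin.sum_univ_succ]
    change c 0 x b + ∑ h : Fin H, c h.succ (s h.castSucc) (a h)
      + W (Fin.last H).succ (s (Fin.last H)) = _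
    ring

theorem expTraj_add (F G : (∀ i, S i) → (Fin H → A) → ℝ) :
    expTraj ρ P π (fun s a => F s a + G s a) = expTraj ρ P π F + expTraj ρ P π G := by
  simp only [expTraj, mul_add, Finset.sum_add_distrib]

theorem expTraj_sum_telescope (hP : ∀ h x b, ∑ y, P h x b y = 1) (hπ : ∀ h x, ∑ b, π h x b = 1)
    (W : ∀ i, S i → ℝ) (hW : ∀ x, W (Fin.last H) x = 0) :
    expTraj ρ P π (fun s a => ∑ h, (W h.castSucc (s h.castSucc)
      - ∑ y, P h (s h.castSucc) (a h) y * W h.succ y)) = ∑ x, ρ x * W 0 x := by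
  have := expTraj_eq_of_bellman ρ P π hP hπ
    (fun h x b => W h.castSucc x - ∑ y, P h x b y * W h.succ y) W fun h x => by
    simp only [sub_add_cancel, ← Finset.sum_mul, hπ, one_mul]
  simpa [hW] using this

variable (πref r : ∀ h : Fin H, S h.castSucc → A → ℝ) (β : ℝ)
  (f : ∀ h : Fin H, S h.castSucc → A → ℝ)

theorem expTraj_bellman_residual_add_soft_advantage (hP : ∀ h x b, ∑ y, P h x b y = 1)
    (μ : ∀ h : Fin H, S h.castSucc → A → ℝ) (hμ : ∀ h x, ∑ b, μ h x b = 1) :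
    expTraj ρ P μ (fun s a => ∑ h : Fin H,
        (Tpol P πref r β π f h (s h.castSucc) (a h) - f h (s h.castSucc) (a h)))
      + expTraj ρ P μ (fun s a => ∑ h : Fin H,
        (f h (s h.castSucc) (a h)
          - β * Real.log (μ h (s h.castSucc) (a h) / πref h (s h.castSucc) (a h))
          - ∑ b : A, π h (s h.castSucc) b *
              (f h (s h.castSucc) b
                - β * Real.log (π h (s h.castSucc) b / πref h (s h.castSucc) b))))
      = KLret ρ P πref r β μ - ∑ x, ρ x * softCont πref β π f 0 x := by
  rw [← expTraj_add, ← expTraj_sum_telescope ρ P μ hP hμ _ (softCont_last πref β π f), KLret,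
    eq_sub_iff_add_eq, ← expTraj_add]
  congr 1
  funext s a
  rw [← Finset.sum_add_distrib, ← Finset.sum_add_distrib]
  refine Finset.sum_congr rfl fun h _ => ?_
  rw [softCont_castSucc, Tpol]
  ring

theorem expTraj_neg_bellman_residual (hP : ∀ h x b, ∑ y, P h x b y = 1)
    (hπ : ∀ h x, ∑ b, π h x b = 1) :
    expTraj ρ P π (fun s a => ∑ h : Fin H,
        (f h (s h.castSucc) (a h) - Tpol P πref r β π f h (s h.castSucc) (a h)))
      = ∑ x, ρ x * softCont πref β π f 0 x - KLret ρ P πref r β π := by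
  have hV := expTraj_eq_of_bellman ρ P π hP hπ
    (fun h x b => f h x b - β * Real.log (π h x b / πref h x b)
      - ∑ y, P h x b y * softCont πref β π f h.succ y)
    (softCont πref β π f) fun h x => by simp only [softCont_castSucc, sub_add_cancel]
  simp only [softCont_last, add_zero] at hV
  rw [KLret, eq_sub_iff_add_eq, ← expTraj_add, ← hV]
  congr 1
  funext s a
  rw [← Finset.sum_add_distrib]
  refine Finset.sum_congr rfl fun h _ => ?_
  rw [Tpol]
  ring

end

variable {H : ℕ} {S : Fin (H + 1) → Type*} {A : Type*}
variable [∀ i, Fintype (S i)] [∀ i, DecidableEq (S i)] [Fintype A] [DecidableEq A]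

theorem soft_performance_difference_general
    (ρ : S 0 → ℝ)
    (P : ∀ h : Fin H, S h.castSucc → A → S h.succ → ℝ)
    (hP : ∀ h s a, IsPMF (P h s a))
    (r : ∀ h : Fin H, S h.castSucc → A → ℝ)
    (πref : ∀ h : Fin H, S h.castSucc → A → ℝ)
    (β : ℝ)
    (πdag π : ∀ h : Fin H, S h.castSucc → A → ℝ)
    (hπdag : ∀ h s, IsPMF (πdag h s)) (hπ : ∀ h s, IsPMF (π h s))
    (f : ∀ h : Fin H, S h.castSucc → A → ℝ) :
    KLret ρ P πref r β πdag - KLret ρ P πref r β π =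
      expTraj ρ P πdag (fun s a => ∑ h : Fin H,
          (Tpol P πref r β π f h (s h.castSucc) (a h) - f h (s h.castSucc) (a h)))
        + expTraj ρ P π (fun s a => ∑ h : Fin H,
            (f h (s h.castSucc) (a h) - Tpol P πref r β π f h (s h.castSucc) (a h)))
        + expTraj ρ P πdag (fun s a => ∑ h : Fin H,
            (f h (s h.castSucc) (a h)
              - β * Real.log (πdag h (s h.castSucc) (a h) / πref h (s h.castSucc) (a h))
              - ∑ b : A, π h (s h.castSucc) b *
                  (f h (s h.castSucc) b
                    - β * Real.log (π h (s h.castSucc) b / πref h (s h.castSucc) b)))) := by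
  have hP1 : ∀ h x b, ∑ y, P h x b y = 1 := fun h x b => (hP h x b).2
  have hdag := expTraj_bellman_residual_add_soft_advantage ρ P π πref r β f hP1 πdag
    fun h x => (hπdag h x).2
  have hpi := expTraj_neg_bellman_residual ρ P π πref r β f hP1 fun h x => (hπ h x).2
  linarith

/-- **Soft performance difference lemma with arbitrary reference function.** -/
theorem soft_performance_difference
    (hH : 0 < H) [∀ i, Nonempty (S i)] [Nonempty A]
    (ρ : S 0 → ℝ) (hρ : IsPMF ρ)
    (P : ∀ h : Fin H, S h.castSucc → A → S h.succ → ℝ)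
    (hP : ∀ h s a, IsPMF (P h s a))
    (r : ∀ h : Fin H, S h.castSucc → A → ℝ)
    (πref : ∀ h : Fin H, S h.castSucc → A → ℝ)
    (hπref : ∀ h s, IsPMF (πref h s)) (hπrefpos : ∀ h s a, 0 < πref h s a)
    (β : ℝ) (hβ : 0 < β)
    (πdag π : ∀ h : Fin H, S h.castSucc → A → ℝ)
    (hπdag : ∀ h s, IsPMF (πdag h s)) (hπ : ∀ h s, IsPMF (π h s))
    (f : ∀ h : Fin H, S h.castSucc → A → ℝ) :
    KLret ρ P πref r β πdag - KLret ρ P πref r β π =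
      expTraj ρ P πdag (fun s a => ∑ h : Fin H,
          (Tpol P πref r β π f h (s h.castSucc) (a h) - f h (s h.castSucc) (a h)))
        + expTraj ρ P π (fun s a => ∑ h : Fin H,
            (f h (s h.castSucc) (a h) - Tpol P πref r β π f h (s h.castSucc) (a h)))
        + expTraj ρ P πdag (fun s a => ∑ h : Fin H,
            (f h (s h.castSucc) (a h)
              - β * Real.log (πdag h (s h.castSucc) (a h) / πref h (s h.castSucc) (a h))
              - ∑ b : A, π h (s h.castSucc) b *
                  (f h (s h.castSucc) b
                    - β * Real.log (π h (s h.castSucc) b / πref h (s h.castSucc) b)))) :=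
  soft_performance_difference_general ρ P hP r πref β πdag π hπdag hπ f

end TBRM
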